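/- arXiv:gr-qc/0207112 — 3 statements merged into one kernel-verified Lean document; each statement's English description precedes it below -/
import Mathlib

section
/- Let N be a natural number, let f : Fin N → (ℝ → ℝ) be a family of functions such that each f_k is continuously differentiable, 2π-periodic, strictly positive, and satisfies ∫₀^{2π} f_k(x) dx = 2π. Then the integral over the cube [0,2π]^N (with respect to N-dimensional Lebesgue measure) of (Σ_{i} f_i'(x_i)/f_i(x_i))² · ∏_{k} f_k(x_k) equals (2π)^{N-1} · Σ_{i} ∫₀^{2π} f_i'(x)²/f_i(x) dx. -/
/-!
Expanding the square writes the integrand as a double sum of functions of product form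
`∏ k, h k (x k)`, and by Fubini each of them integrates to `∏ k, ∫ h k`. A cross term `i ≠ j`
contains the factor `∫ (f_i' / f_i) f_i = ∫ f_i' = 0`, which vanishes by periodicity, so only
the diagonal terms survive; each contributes its energy times `∏ k ≠ i, ∫ f_k = (2π)^(N-1)`.
-/

open MeasureTheory Real Finset

section ProductMeasure

variable {ι : Type*} [Fintype ι] [DecidableEq ι] {α : ι → Type*}

lemma sq_sum_mul_prod_eq_sum_sum_prod (g w : ∀ i, α i → ℝ) (x : ∀ i, α i) :
    (∑ i, g i (x i)) ^ 2 * ∏ k, w k (x k) =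
      ∑ i, ∑ j, ∏ k,
        (if k = i then g k (x k) else 1) * (if k = j then g k (x k) else 1) * w k (x k) := by
  simp only [prod_mul_distrib, prod_ite_eq', mem_univ, if_true]
  rw [sq, sum_mul_sum, sum_mul]
  simp_rw [sum_mul]

variable [∀ i, MeasurableSpace (α i)] {μ : ∀ i, Measure (α i)} [∀ i, SigmaFinite (μ i)]

theorem integral_sq_sum_mul_prod_of_integral_mul_eq_zero {g w : ∀ i, α i → ℝ}
    (hw : ∀ i, Integrable (w i) (μ i))
    (hgw : ∀ i, Integrable (fun t => g i t * w i t) (μ i))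
    (hg2w : ∀ i, Integrable (fun t => g i t ^ 2 * w i t) (μ i))
    (hmean : ∀ i, ∫ t, g i t * w i t ∂μ i = 0) :
    ∫ x, (∑ i, g i (x i)) ^ 2 * ∏ k, w k (x k) ∂Measure.pi μ =
      ∑ i, (∫ t, g i t ^ 2 * w i t ∂μ i) * ∏ k ∈ univ.erase i, ∫ t, w k t ∂μ k := by
  set h : ι → ι → ∀ k, α k → ℝ := fun i j k t =>
    (if k = i then g k t else 1) * (if k = j then g k t else 1) * w k t with h_def
  have h_int : ∀ i j k, Integrable (h i j k) (μ k) := by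
    intro i j k
    simp only [h_def]
    split_ifs
    · simpa only [mul_assoc, ← sq] using hg2w k
    · simpa only [mul_one] using hgw k
    · simpa only [one_mul] using hgw k
    · simpa only [one_mul] using hw k
  have h_prod_int : ∀ i j, Integrable (fun x => ∏ k, h i j k (x k)) (Measure.pi μ) :=
    fun i j => Integrable.fintype_prod_dep (h_int i j)
  have h_off : ∀ i j, j ≠ i → ∫ x, ∏ k, h i j k (x k) ∂Measure.pi μ = 0 := by
    intro i j hji
    rw [integral_fintype_prod_eq_prod]
    refine prod_eq_zero (mem_univ i) ?_
    simpa [h_def, hji.symm] using hmean i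
  have h_diag : ∀ i, ∫ x, ∏ k, h i i k (x k) ∂Measure.pi μ =
      (∫ t, g i t ^ 2 * w i t ∂μ i) * ∏ k ∈ univ.erase i, ∫ t, w k t ∂μ k := by
    intro i
    rw [integral_fintype_prod_eq_prod, ← mul_prod_erase univ _ (mem_univ i)]
    congr 1
    · simp [h_def, sq, mul_assoc]
    · refine prod_congr rfl fun k hk => ?_
      simp [h_def, ne_of_mem_erase hk]
  simp_rw [sq_sum_mul_prod_eq_sum_sum_prod g w]
  rw [integral_finsetSum _ fun i _ => integrable_finsetSum _ fun j _ => h_prod_int i j]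
  refine sum_congr rfl fun i _ => ?_
  rw [integral_finsetSum _ fun j _ => h_prod_int i j, sum_eq_single i (fun j _ => h_off i j)
    (by simp), h_diag]

end ProductMeasure

theorem intervalIntegral_deriv_eq_zero_of_periodic {f : ℝ → ℝ} {T : ℝ} (hf : ContDiff ℝ 1 f)
    (hper : Function.Periodic f T) (a : ℝ) : ∫ x in a..a + T, deriv f x = 0 := by
  rw [intervalIntegral.integral_deriv_eq_sub
    (fun x _ => (hf.differentiable one_ne_zero).differentiableAt)
    ((hf.continuous_deriv le_rfl).intervalIntegrable _ _), hper, sub_self]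

/-- Equation (3.1): for a family of normalized, strictly positive, `2π`-periodic `C¹`
densities, the squared `L²`-norm of the flux derivation applied to the log of the
product density reduces to a sum of single-edge energies. -/
theorem flux_norm_squared_eq_sum_of_energies
    (N : ℕ) (f : Fin N → ℝ → ℝ)
    (hreg : ∀ k, ContDiff ℝ 1 (f k))
    (hper : ∀ k, Function.Periodic (f k) (2 * π))
    (hpos : ∀ k x, 0 < f k x)
    (hnorm : ∀ k, ∫ x in (0 : ℝ)..(2 * π), f k x = 2 * π) :
    ∫ x in Set.pi Set.univ (fun _ : Fin N => Set.Icc (0 : ℝ) (2 * π)),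
        (∑ i, deriv (f i) (x i) / f i (x i)) ^ 2 * ∏ k, f k (x k)
      = (2 * π) ^ (N - 1) * ∑ i, ∫ x in (0 : ℝ)..(2 * π), (deriv (f i) x) ^ 2 / f i x := by
  have hne : ∀ k x, f k x ≠ 0 := fun k x => (hpos k x).ne'
  have hIcc : ∀ g : ℝ → ℝ, ∫ x in Set.Icc 0 (2 * π), g x = ∫ x in (0 : ℝ)..(2 * π), g x :=
    fun g => by rw [intervalIntegral.integral_of_le two_pi_pos.le, integral_Icc_eq_integral_Ioc]
  have hcont : ∀ k, Continuous fun x => deriv (f k) x / f k x := fun k =>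
    ((hreg k).continuous_deriv le_rfl).div (hreg k).continuous (hne k)
  have hlog : ∀ k x, deriv (f k) x / f k x * f k x = deriv (f k) x :=
    fun k x => div_mul_cancel₀ _ (hne k x)
  have henergy : ∀ k x, (deriv (f k) x / f k x) ^ 2 * f k x = deriv (f k) x ^ 2 / f k x :=
    fun k x => by field_simp [hne k x]
  rw [volume_pi, Measure.restrict_pi_pi, integral_sq_sum_mul_prod_of_integral_mul_eq_zero
    (fun k => (hreg k).continuous.integrableOn_Icc)
    (fun k => ((hcont k).mul (hreg k).continuous).integrableOn_Icc)
    (fun k => (((hcont k).pow 2).mul (hreg k).continuous).integrableOn_Icc)]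
  · simp_rw [henergy, hIcc, hnorm, prod_const, card_erase_of_mem (mem_univ _),
      card_univ, Fintype.card_fin, mul_sum, mul_comm]
  · intro k
    simp_rw [hlog, hIcc]
    simpa using intervalIntegral_deriv_eq_zero_of_periodic (hreg k) (hper k) 0
end

section
/- Let F : ℝ³ → ℝ be a Schwartz function, and let e : ℝ → ℝ³ be continuously differentiable. For ε ∈ (0,1], define G_ε : ℝ³ → ℝ³ by G_ε(x) = ∫_{(1-ε)/2}^{(1+ε)/2} F(x − e(t)) · e'(t) dt. Then for every natural number k there is a constant C such that for all ε ∈ (0,1] and all x ∈ ℝ³, (1 + ‖x‖)^k · ‖G_ε(x)‖ ≤ C · ε. In particular, each weighted supremum sup_x (1 + ‖x‖)^k ‖G_ε(x)‖ tends to 0 as ε → 0. -/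
/-! The weight `(1 + ‖x‖)^k` is moved onto the Schwartz factor by Peetre's inequality
`(1 + ‖x‖)^k ≤ (1 + ‖x - y‖)^k (1 + ‖y‖)^k` with `y = e t`; since `e` and `e'` are bounded on
`[0, 1]`, the weighted integrand is then uniformly bounded, and the interval of integration has
length `ε`. -/

open MeasureTheory intervalIntegral Filter Topology Set

theorem one_add_norm_pow_le_mul {E : Type*} [SeminormedAddCommGroup E] (x y : E) (k : ℕ) :
    (1 + ‖x‖) ^ k ≤ (1 + ‖x - y‖) ^ k * (1 + ‖y‖) ^ k := by
  rw [← mul_pow]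
  gcongr
  nlinarith [norm_le_norm_sub_add x y, norm_nonneg (x - y), norm_nonneg y]

theorem SchwartzMap.exists_one_add_norm_pow_mul_le {E V : Type*} [NormedAddCommGroup E]
    [NormedSpace ℝ E] [NormedAddCommGroup V] [NormedSpace ℝ V] (F : SchwartzMap E V) (k : ℕ) :
    ∃ B, ∀ y, (1 + ‖y‖) ^ k * ‖F y‖ ≤ B :=
  ⟨_, fun y => by
    simpa using SchwartzMap.one_add_le_sup_seminorm_apply (𝕜 := ℝ) (m := (k, 0)) le_rfl le_rfl F y⟩

theorem one_add_norm_pow_mul_norm_integral_le {E W : Type*} [SeminormedAddCommGroup E]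
    [NormedAddCommGroup W] [NormedSpace ℝ W] {F : E → ℝ} {γ : ℝ → E} {v : ℝ → W} {k : ℕ}
    {B M M' a b : ℝ} (hF : ∀ y, (1 + ‖y‖) ^ k * ‖F y‖ ≤ B) (hγ : ∀ t ∈ uIcc a b, ‖γ t‖ ≤ M)
    (hv : ∀ t ∈ uIcc a b, ‖v t‖ ≤ M') (x : E) :
    (1 + ‖x‖) ^ k * ‖∫ t in a..b, F (x - γ t) • v t‖ ≤ B * (1 + M) ^ k * M' * |b - a| := by
  have hw : 0 ≤ (1 + ‖x‖) ^ k := by positivity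
  rw [← Real.norm_of_nonneg hw, ← norm_smul, ← intervalIntegral.integral_smul]
  refine norm_integral_le_of_norm_le_const fun t ht => ?_
  have ht := uIoc_subset_uIcc ht
  have hB : 0 ≤ B := (mul_nonneg (by positivity) (norm_nonneg _)).trans (hF 0)
  have hM : 1 + ‖γ t‖ ≤ 1 + M := by linarith [hγ t ht]
  calc ‖(1 + ‖x‖) ^ k • F (x - γ t) • v t‖
      = (1 + ‖x‖) ^ k * ‖F (x - γ t)‖ * ‖v t‖ := by
        rw [norm_smul, norm_smul, Real.norm_of_nonneg hw, mul_assoc]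
    _ ≤ ((1 + ‖x - γ t‖) ^ k * ‖F (x - γ t)‖) * (1 + ‖γ t‖) ^ k * ‖v t‖ := by
        linear_combination (‖F (x - γ t)‖ * ‖v t‖) * one_add_norm_pow_le_mul x (γ t) k
    _ ≤ B * (1 + M) ^ k * M' := by
        have : 0 ≤ 1 + M := (by positivity : (0:ℝ) ≤ 1 + ‖γ t‖).trans hM
        gcongr
        exacts [hF _, hv t ht]

theorem tendsto_iSup_nhdsWithin_zero_of_le_mul {ι : Type*} [Nonempty ι] {f : ℝ → ι → ℝ}
    {s : Set ℝ} {C : ℝ} (hf₀ : ∀ ε i, 0 ≤ f ε i) (hf : ∀ ε ∈ s, ∀ i, f ε i ≤ C * ε) :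
    Tendsto (fun ε => ⨆ i, f ε i) (𝓝[s] 0) (𝓝 0) := by
  have hC : Tendsto (fun ε => C * ε) (𝓝[s] 0) (𝓝 0) :=
    tendsto_nhdsWithin_of_tendsto_nhds (by simpa using (continuous_const_mul C).tendsto 0)
  refine squeeze_zero' (Eventually.of_forall fun ε => Real.iSup_nonneg (hf₀ ε)) ?_ hC
  filter_upwards [self_mem_nhdsWithin] with ε hε using ciSup_le (hf ε hε)

/-- The smeared form factor of the shortened edge `e_ε` tends to `0` in Schwartz space:
each Schwartz seminorm-type weighted supremum is bounded by `C·ε` and hence tends to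
`0` as `ε → 0`. -/
theorem form_factor_schwartz_estimate
    (F : SchwartzMap (EuclideanSpace ℝ (Fin 3)) ℝ)
    (e : ℝ → EuclideanSpace ℝ (Fin 3)) (he : ContDiff ℝ 1 e) :
    ∀ k : ℕ,
      (∃ C : ℝ, ∀ ε ∈ Set.Ioc (0 : ℝ) 1, ∀ x : EuclideanSpace ℝ (Fin 3),
        (1 + ‖x‖) ^ k * ‖∫ t in ((1 - ε) / 2)..((1 + ε) / 2), F (x - e t) • deriv e t‖
          ≤ C * ε) ∧
      Filter.Tendsto
        (fun ε : ℝ => ⨆ x : EuclideanSpace ℝ (Fin 3),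
          (1 + ‖x‖) ^ k * ‖∫ t in ((1 - ε) / 2)..((1 + ε) / 2), F (x - e t) • deriv e t‖)
        (nhdsWithin 0 (Set.Ioc (0 : ℝ) 1)) (nhds 0) := by
  intro k
  obtain ⟨B, hB⟩ := F.exists_one_add_norm_pow_mul_le k
  obtain ⟨M, hM⟩ := isCompact_Icc.exists_bound_of_continuousOn
    (he.continuous.continuousOn (s := Icc (0 : ℝ) 1))
  obtain ⟨M', hM'⟩ := isCompact_Icc.exists_bound_of_continuousOn
    ((he.continuous_deriv le_rfl).continuousOn (s := Icc (0 : ℝ) 1))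
  have hbound : ∀ ε ∈ Ioc (0 : ℝ) 1, ∀ x : EuclideanSpace ℝ (Fin 3),
      (1 + ‖x‖) ^ k * ‖∫ t in ((1 - ε) / 2)..((1 + ε) / 2), F (x - e t) • deriv e t‖
        ≤ B * (1 + M) ^ k * M' * ε := by
    rintro ε ⟨hε₀, hε₁⟩ x
    have hsub : uIcc ((1 - ε) / 2) ((1 + ε) / 2) ⊆ Icc 0 1 := by
      rw [uIcc_of_le (by linarith)]
      exact Icc_subset_Icc (by linarith) (by linarith)
    have hlen : |(1 + ε) / 2 - (1 - ε) / 2| = ε := by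
      rw [abs_of_nonneg (by linarith)]
      ring
    simpa only [hlen] using one_add_norm_pow_mul_norm_integral_le hB
      (fun t ht => hM t (hsub ht)) (fun t ht => hM' t (hsub ht)) x
  exact ⟨⟨_, hbound⟩, tendsto_iSup_nhdsWithin_zero_of_le_mul (fun _ _ => by positivity) hbound⟩
end

section
/- Let (Ω, Σ, μ) be a finite measure space and let D be a set of bounded measurable functions Ω → ℂ that forms a complex subalgebra closed under complex conjugation. Let X : D → D be a ℂ-linear map satisfying the Leibniz rule X(a·b) = X(a)·b + a·X(b) for all a, b ∈ D, and commuting with complex conjugation: X(conj a) = conj(X a). Let G : Ω → ℝ be a bounded measurable real-valued function such that ∫ X(c) dμ = ∫ c·G dμ for all c ∈ D. Then the operator π defined on D by π(a) = i·X(a) − (i/2)·G·a is symmetric on D with respect to the L²(μ) inner product: for all a, b ∈ D, ⟨π(a), b⟩_{L²(μ)} = ⟨a, π(b)⟩_{L²(μ)}. -/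
/-!
Write `π = i X − (i/2) G`. Since `X` is a derivation commuting with conjugation,
`X (ā b) = conj (X a) b + ā X b`, so the divergence hypothesis applied to `ā b ∈ D` is the
integration-by-parts formula `⟨X a, b⟩ + ⟨a, X b⟩ = ∫ ā b G dμ`. Thus `i X` is symmetric up to
the multiplication operator by `i G`, and the correction `−(i/2) G` splits that defect evenly
between the two sides.
-/

open MeasureTheory ComplexConjugate

section ConjOf

variable {Ω : Type*} {D : Subalgebra ℂ (Ω → ℂ)}

def Subalgebra.conjOf (hconj : ∀ a ∈ D, (fun ω => conj (a ω)) ∈ D) (a : D) : D :=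
  ⟨fun ω => conj ((a : Ω → ℂ) ω), hconj a a.2⟩

@[simp]
lemma Subalgebra.coe_conjOf (hconj : ∀ a ∈ D, (fun ω => conj (a ω)) ∈ D) (a : D) :
    (Subalgebra.conjOf hconj a : Ω → ℂ) = fun ω => conj ((a : Ω → ℂ) ω) :=
  rfl

end ConjOf

section Symmetric

variable {Ω : Type*} [MeasurableSpace Ω] {μ : Measure Ω}

lemma integral_conj_corrected_mul_eq {a b Xa Xb : Ω → ℂ} {G : Ω → ℝ}
    (hXa : Integrable (fun ω => conj (Xa ω) * b ω) μ)
    (hXb : Integrable (fun ω => conj (a ω) * Xb ω) μ)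
    (hG : Integrable (fun ω => conj (a ω) * b ω * G ω) μ)
    (hparts : ∫ ω, conj (Xa ω) * b ω ∂μ + ∫ ω, conj (a ω) * Xb ω ∂μ
      = ∫ ω, conj (a ω) * b ω * G ω ∂μ) :
    ∫ ω, conj (Complex.I * Xa ω - Complex.I / 2 * G ω * a ω) * b ω ∂μ
      = ∫ ω, conj (a ω) * (Complex.I * Xb ω - Complex.I / 2 * G ω * b ω) ∂μ := by
  have hlhs : (fun ω => conj (Complex.I * Xa ω - Complex.I / 2 * G ω * a ω) * b ω)
      = fun ω => -Complex.I * (conj (Xa ω) * b ω) + Complex.I / 2 * (conj (a ω) * b ω * G ω) := by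
    ext ω
    simp only [map_sub, map_mul, map_div₀, Complex.conj_I, Complex.conj_ofReal, map_ofNat]
    ring
  have hrhs : (fun ω => conj (a ω) * (Complex.I * Xb ω - Complex.I / 2 * G ω * b ω))
      = fun ω => Complex.I * (conj (a ω) * Xb ω) - Complex.I / 2 * (conj (a ω) * b ω * G ω) := by
    ext ω
    ring
  rw [hlhs, hrhs, integral_add (hXa.const_mul _) (hG.const_mul _),
    integral_sub (hXb.const_mul _) (hG.const_mul _)]
  simp only [integral_const_mul]
  linear_combination (-Complex.I) * hparts

variable {D : Subalgebra ℂ (Ω → ℂ)}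

lemma integrable_of_mem_subalgebra [IsFiniteMeasure μ] (hmeas : ∀ a ∈ D, Measurable a)
    (hbdd : ∀ a ∈ D, ∃ M : ℝ, ∀ ω, ‖a ω‖ ≤ M) (a : D) : Integrable (a : Ω → ℂ) μ := by
  obtain ⟨M, hM⟩ := hbdd a a.2
  exact .of_bound (hmeas a a.2).aestronglyMeasurable M (.of_forall hM)

lemma integral_conj_map_mul_add_integral_conj_mul_map
    (hint : ∀ a : D, Integrable (a : Ω → ℂ) μ)
    (hconj : ∀ a ∈ D, (fun ω => conj (a ω)) ∈ D) (X : D →ₗ[ℂ] D)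
    (hLeib : ∀ a b : D, X (a * b) = X a * b + a * X b)
    (hXconj : ∀ a b : D, ((b : Ω → ℂ) = fun ω => conj ((a : Ω → ℂ) ω)) →
      ((X b : Ω → ℂ) = fun ω => conj ((X a : Ω → ℂ) ω)))
    (G : Ω → ℝ)
    (hdiv : ∀ a : D, ∫ ω, (X a : Ω → ℂ) ω ∂μ = ∫ ω, (a : Ω → ℂ) ω * (G ω : ℂ) ∂μ)
    (a b : D) :
    ∫ ω, conj ((X a : Ω → ℂ) ω) * (b : Ω → ℂ) ω ∂μ
        + ∫ ω, conj ((a : Ω → ℂ) ω) * (X b : Ω → ℂ) ω ∂μ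
      = ∫ ω, conj ((a : Ω → ℂ) ω) * (b : Ω → ℂ) ω * G ω ∂μ := by
  set a' := Subalgebra.conjOf hconj a
  have hXa' : (X a' : Ω → ℂ) = fun ω => conj ((X a : Ω → ℂ) ω) :=
    hXconj a a' (Subalgebra.coe_conjOf hconj a)
  have hXc : (X (a' * b) : Ω → ℂ) = fun ω =>
      conj ((X a : Ω → ℂ) ω) * (b : Ω → ℂ) ω + conj ((a : Ω → ℂ) ω) * (X b : Ω → ℂ) ω := by
    rw [hLeib]
    ext ω
    simp [hXa', a']
  calc _ = ∫ ω, (X (a' * b) : Ω → ℂ) ω ∂μ := by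
        rw [hXc]
        exact (integral_add (hint (Subalgebra.conjOf hconj (X a) * b))
          (hint (Subalgebra.conjOf hconj a * X b))).symm
    _ = _ := hdiv _

end Symmetric

/-- Sufficiency direction of the admissibility criterion: if the divergence of the
measure with respect to a real derivation `X` on a conjugation-closed algebra `D` of
bounded measurable functions is given by a bounded measurable real function `G`, then
`π(a) = i·X(a) − (i/2)·G·a` is symmetric on `D` w.r.t. the `L²(μ)` inner product. -/
theorem corrected_flux_operator_symmetric
    {Ω : Type*} [MeasurableSpace Ω] (μ : Measure Ω) [IsFiniteMeasure μ]
    (D : Subalgebra ℂ (Ω → ℂ))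
    (hmeas : ∀ a ∈ D, Measurable a)
    (hbdd : ∀ a ∈ D, ∃ M : ℝ, ∀ ω, ‖a ω‖ ≤ M)
    (hconj : ∀ a ∈ D, (fun ω => conj (a ω)) ∈ D)
    (X : D →ₗ[ℂ] D)
    (hLeib : ∀ a b : D, X (a * b) = X a * b + a * X b)
    (hXconj : ∀ a b : D, ((b : Ω → ℂ) = fun ω => conj ((a : Ω → ℂ) ω)) →
      ((X b : Ω → ℂ) = fun ω => conj ((X a : Ω → ℂ) ω)))
    (G : Ω → ℝ) (hGmeas : Measurable G) (hGbdd : ∃ M : ℝ, ∀ ω, |G ω| ≤ M)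
    (hdiv : ∀ a : D, ∫ ω, (X a : Ω → ℂ) ω ∂μ = ∫ ω, (a : Ω → ℂ) ω * (G ω : ℂ) ∂μ) :
    ∀ a b : D,
      ∫ ω, conj (Complex.I * (X a : Ω → ℂ) ω - Complex.I / 2 * (G ω : ℂ) * (a : Ω → ℂ) ω)
          * (b : Ω → ℂ) ω ∂μ
        = ∫ ω, conj ((a : Ω → ℂ) ω)
          * (Complex.I * (X b : Ω → ℂ) ω - Complex.I / 2 * (G ω : ℂ) * (b : Ω → ℂ) ω) ∂μ := by
  intro a b
  have hint := integrable_of_mem_subalgebra (μ := μ) hmeas hbdd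
  obtain ⟨M, hM⟩ := hGbdd
  have hG : Integrable (fun ω => conj ((a : Ω → ℂ) ω) * (b : Ω → ℂ) ω * G ω) μ :=
    (hint (Subalgebra.conjOf hconj a * b)).mul_bdd
      (Complex.measurable_ofReal.comp hGmeas).aestronglyMeasurable
      (.of_forall fun ω => by simpa using hM ω)
  exact integral_conj_corrected_mul_eq
    (hint (Subalgebra.conjOf hconj (X a) * b)) (hint (Subalgebra.conjOf hconj a * X b)) hG
    (integral_conj_map_mul_add_integral_conj_mul_map hint hconj X hLeib hXconj G hdiv a b)
end
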